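/- A binary form f ∈ K[x,y]_d has K-rank at most r if and only if the degree-r part (f^⊥)_r of its apolar ideal contains a form of degree r with r distinct roots, all defined over K. -/

import Mathlib

open MvPolynomial

noncomputable section

/-- The Zariski closure of a subset of the affine space `σ → K`. -/
def zClosure {K : Type} [Field K] {σ : Type} [Fintype σ] [DecidableEq σ]
    (S : Set (σ → K)) : Set (σ → K) :=
  {x | ∀ p : MvPolynomial σ K, (∀ y ∈ S, eval y p = 0) → eval x p = 0}

/-- A subset of affine space is Zariski closed if it equals its Zariski closure. -/
def zClosed {K : Type} [Field K] {σ : Type} [Fintype σ] [DecidableEq σ]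
    (S : Set (σ → K)) : Prop :=
  zClosure S = S

/-- Irreducibility of a subset of affine space in the Zariski topology,
tested against the basic open sets. -/
def zIrreducible {K : Type} [Field K] {σ : Type} [Fintype σ] [DecidableEq σ]
    (S : Set (σ → K)) : Prop :=
  S.Nonempty ∧ ∀ p q : MvPolynomial σ K,
    (∀ x ∈ S, eval x p = 0 ∨ eval x q = 0) →
    (∀ x ∈ S, eval x p = 0) ∨ (∀ x ∈ S, eval x q = 0)

/-- There is a strictly increasing chain of `m+1` irreducible Zariski-closed
subsets contained in `S`. -/
def zChain {K : Type} [Field K] {σ : Type} [Fintype σ] [DecidableEq σ]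
    (S : Set (σ → K)) (m : ℕ) : Prop :=
  ∃ c : Fin (m+1) → Set (σ → K),
    (∀ i, zIrreducible (c i) ∧ zClosed (c i) ∧ c i ⊆ S) ∧
    ∀ i j : Fin (m+1), i < j → c i ⊂ c j

/-- `S` has (Krull) dimension `m` in the Zariski topology. -/
def zDimEq {K : Type} [Field K] {σ : Type} [Fintype σ] [DecidableEq σ]
    (S : Set (σ → K)) (m : ℕ) : Prop :=
  zChain S m ∧ ¬ zChain S (m+1)

/-- The (embedded, affine) Zariski tangent space to `S` at `a`: the common kernel of the
differentials at `a` of all polynomials vanishing on `S`. -/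
def zTangentAt {K : Type} [Field K] {σ : Type} [Fintype σ] [DecidableEq σ]
    (S : Set (σ → K)) (a : σ → K) : Set (σ → K) :=
  {v | ∀ p : MvPolynomial σ K, (∀ y ∈ S, eval y p = 0) →
        ∑ i : σ, eval a (pderiv i p) * v i = 0}

/-- Dimension of the Zariski tangent space at a point. -/
def zTangentDim {K : Type} [Field K] {σ : Type} [Fintype σ] [DecidableEq σ]
    (S : Set (σ → K)) (a : σ → K) : ℕ :=
  Module.finrank K (Submodule.span K (zTangentAt S a))

/-- The binary form of degree `r` with coefficient vector `a`. -/
def binForm {K : Type} [CommSemiring K] (r : ℕ) (a : Fin (r+1) → K) :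
    MvPolynomial (Fin 2) K :=
  ∑ i : Fin (r+1), C (a i) * X 0 ^ (r - (i : ℕ)) * X 1 ^ (i : ℕ)

/-- The linear binary form `u·x + v·y`. -/
def linForm {K : Type} [CommSemiring K] (u v : K) : MvPolynomial (Fin 2) K :=
  C u * X 0 + C v * X 1

/-- The affine cone over the coincident root locus `Δ_λ ⊆ ℙ^r`, in coefficient coordinates:
scalar multiples of forms `∏ ℓ_i ^ λ_i`. -/
def crlCone (r n : ℕ) (lam : Fin n → ℕ) : Set (Fin (r+1) → ℂ) :=
  {a | ∃ (t : ℂ) (u v : Fin n → ℂ),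
    binForm r a = C t * ∏ i, (linForm (u i) (v i)) ^ lam i}

/-- `lam` is a partition of `r` of length `n` (all parts positive). -/
def isPartitionOf (r n : ℕ) (lam : Fin n → ℕ) : Prop :=
  (∀ i, 1 ≤ lam i) ∧ ∑ i, lam i = r

/-- The multiplicity `m_j` of the part `j` in the partition `lam`. -/
def multOf {n : ℕ} (lam : Fin n → ℕ) (jj : ℕ) : ℕ :=
  (Finset.univ.filter fun i => lam i = jj).card

/-- The differential operator of degree `s` with coefficient vector `b`, i.e.
`∑ b_i ∂x^(s-i) ∂y^i`, applied to `f`. -/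
def diffOp {K : Type} [CommSemiring K] (s : ℕ) (b : Fin (s+1) → K)
    (f : MvPolynomial (Fin 2) K) : MvPolynomial (Fin 2) K :=
  ∑ i : Fin (s+1), b i •
    ((fun g => pderiv (0 : Fin 2) g)^[s - (i : ℕ)]
      (((fun g => pderiv (1 : Fin 2) g)^[(i : ℕ)]) f))

/-- The apolarity pairing between a degree-`d` operator (coefficients `h`) and a
degree-`d` form (coefficients `a`). -/
def apolarPair (d : ℕ) (h a : Fin (d+1) → ℂ) : ℂ :=
  eval (fun _ => (0 : ℂ)) (diffOp d h (binForm d a))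

/-- The cone over the dual variety of the cone `S ⊆ ℂ^(m+1)` (with `k` the dimension of the
cone `S`, used to select smooth points): closure of the set of hyperplanes, written in dual
coordinates via the apolarity pairing, containing an embedded tangent space at a smooth point. -/
def dualConeOf (m : ℕ) (S : Set (Fin (m+1) → ℂ)) (k : ℕ) : Set (Fin (m+1) → ℂ) :=
  zClosure {h | h ≠ 0 ∧ ∃ a ∈ S, a ≠ 0 ∧ zTangentDim S a = k ∧
      ∀ v ∈ zTangentAt S a, apolarPair m h v = 0}

/-- The row span of a matrix, as a subspace of `ℂ^m`. -/
def rowSpan {k m : ℕ} (M : Matrix (Fin k) (Fin m) ℂ) : Submodule ℂ (Fin m → ℂ) :=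
  Submodule.span ℂ (Set.range fun i => M i)

/-- The (redundant) Plücker coordinate vector of the row span of `M`: all maximal minors. -/
def plucker {k m : ℕ} (M : Matrix (Fin k) (Fin m) ℂ) : (Fin k → Fin m) → ℂ :=
  fun s => (M.submatrix id s).det

/-- The degree-`s` component of the apolar ideal of the degree-`d` form with
coefficients `a`, as a subset of the coefficient space of operators. -/
def apolarSet (d s : ℕ) (a : Fin (d+1) → ℂ) : Set (Fin (s+1) → ℂ) :=
  {b | diffOp s b (binForm d a) = 0}

/-- The (pre-closure) cone, in Plücker coordinates, over the `j`-th higher associated variety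
`CH_j(S)`: spans of `k`-row matrices whose row space contains a smooth point `x` of the cone
`S` (`dimS` = dimension of the cone `S`) and meets the tangent space at `x` in projective
dimension at least `j`. -/
def smoothCHCone (m : ℕ) (S : Set (Fin (m+1) → ℂ)) (dimS k j : ℕ) :
    Set ((Fin k → Fin (m+1)) → ℂ) :=
  {u | ∃ M : Matrix (Fin k) (Fin (m+1)) ℂ, u = plucker M ∧
    Module.finrank ℂ (rowSpan M) = k ∧
    ∃ x, x ≠ 0 ∧ x ∈ S ∧ zTangentDim S x = dimS ∧ x ∈ rowSpan M ∧
      j + 1 ≤ Module.finrank ℂ ↥(rowSpan M ⊓ Submodule.span ℂ (zTangentAt S x))}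

/-- The (pre-closure) cone, in Plücker coordinates, over `Ξ_0(S)`: spans of `k`-row matrices
whose row space meets the cone `S` nontrivially. -/
def meetCone (m : ℕ) (S : Set (Fin (m+1) → ℂ)) (k : ℕ) :
    Set ((Fin k → Fin (m+1)) → ℂ) :=
  {u | ∃ M : Matrix (Fin k) (Fin (m+1)) ℂ, u = plucker M ∧
    Module.finrank ℂ (rowSpan M) = k ∧ ∃ x, x ≠ 0 ∧ x ∈ S ∧ x ∈ rowSpan M}

/-- The preimage under the apolar map `Ψ_{d,s}` of a subset `T` of the Grassmannian
(in Plücker coordinates) of `(k-1)`-projective-dimensional subspaces of `ℙ(D_s)`. -/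
def apolarPull (d s k : ℕ) (T : Set ((Fin k → Fin (s+1)) → ℂ)) : Set (Fin (d+1) → ℂ) :=
  {a | ∃ M : Matrix (Fin k) (Fin (s+1)) ℂ,
    rowSpan M = Submodule.span ℂ (apolarSet d s a) ∧
    Module.finrank ℂ (rowSpan M) = k ∧ plucker M ∈ T}

/-- The Waring rank over `K` of a binary form: the least `r` such that `f` is a sum of `r`
scalar multiples of `d`-th powers of linear forms. -/
def waringRank {K : Type} [Field K] (d : ℕ) (f : MvPolynomial (Fin 2) K) : ℕ :=
  sInf {r | ∃ (α u v : Fin r → K), f = ∑ i, α i • (linForm (u i) (v i)) ^ d}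

/-- The set of coefficient vectors of real binary forms of degree `d` of real rank `r`. -/
def realRankSet (d r : ℕ) : Set (Fin (d+1) → ℝ) :=
  {a | waringRank d (binForm d a) = r}

/-- `R_{d,r}`: the interior, in the Euclidean topology, of the set of real binary forms of
degree `d` and real rank `r`. -/
def Rdr (d r : ℕ) : Set (Fin (d+1) → ℝ) := interior (realRankSet d r)

/-- The topological boundary of `R_{d,r}`: the closure of `R_{d,r}` minus the interior of
the closure. -/
def topBoundary (d r : ℕ) : Set (Fin (d+1) → ℝ) :=
  closure (Rdr d r) \ interior (closure (Rdr d r))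

/-- The algebraic boundary `∂_alg(R_{d,r})`: the Zariski closure over `ℂ` of the topological
boundary of `R_{d,r}`. -/
def algBoundary (d r : ℕ) : Set (Fin (d+1) → ℂ) :=
  zClosure ((fun a i => ((a i : ℝ) : ℂ)) '' topBoundary d r)


/-!
Write `D_{A,B} = A ∂_y - B ∂_x` and `ℓ_{u,v} = u x + v y`. By the Leibniz rule
`D_{A,B} (ℓ_{u,v} ^ n) = n (A v - B u) ℓ_{u,v} ^ (n - 1)`: the operator kills `ℓ_{u,v} ^ d` when
`(A : B) = (u : v)` in `ℙ¹(K)` and otherwise only rescales and lowers the exponent.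

If `f = ∑ α_i ℓ_{u_i,v_i} ^ d` with at most `r` terms, pick `r` distinct points of `ℙ¹(K)` (which is
infinite) containing all the `(u_i : v_i)`; every term is killed by one of the `r` operators.
Conversely, on forms of degree `n` the kernel of `D_{A,B}` is spanned by `ℓ_{A,B} ^ n` (induct on
`n`, using that `D_{A,B}` commutes with `∂_x, ∂_y`, and conclude with Euler's identity), while
`D_{A_j,B_j}` maps the span of the `ℓ_k ^ (n + 1)` onto the span of the `ℓ_k ^ n` for points
`k ≠ j`. Peeling off the operators one at a time puts `f` in the span of the `ℓ_{A_j,B_j} ^ d`.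
-/

namespace MvPolynomial

theorem pderiv_pderiv_comm {R σ : Type*} [CommRing R] (i j : σ) (f : MvPolynomial σ R) :
    pderiv i (pderiv j f) = pderiv j (pderiv i f) := by
  have h : ⁅pderiv i, pderiv j⁆ = (0 : Derivation R (MvPolynomial σ R) (MvPolynomial σ R)) :=
    derivation_ext fun k => by
      classical
      rw [Derivation.commutator_apply, pderiv_X, pderiv_X]
      simp [Pi.single_apply, apply_ite]
  have := congr($h f)
  rwa [Derivation.commutator_apply, Derivation.zero_apply, sub_eq_zero] at this

theorem IsHomogeneous.eq_C_coeff_zero {R σ : Type*} [CommSemiring R] {f : MvPolynomial σ R}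
    (hf : f.IsHomogeneous 0) : f = C (coeff 0 f) :=
  totalDegree_eq_zero_iff_eq_C.mp (Nat.le_zero.mp hf.totalDegree_le)

end MvPolynomial

section FoldlApply

variable {F M ι : Type*} [AddCommMonoid M] [FunLike F M M] [AddMonoidHomClass F M M]

theorem List.foldl_apply_zero (D : ι → F) (l : List ι) : l.foldl (fun y i => D i y) 0 = 0 := by
  induction l with
  | nil => rfl
  | cons j l ih => rwa [List.foldl_cons, map_zero]

theorem List.foldl_apply_sum {κ : Type*} (D : ι → F) (l : List ι) (s : Finset κ) (g : κ → M) :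
    l.foldl (fun y i => D i y) (∑ k ∈ s, g k) = ∑ k ∈ s, l.foldl (fun y i => D i y) (g k) := by
  induction l generalizing g with
  | nil => rfl
  | cons j l ih => simp only [List.foldl_cons, map_sum, ih]

end FoldlApply

theorem Finset.exists_injective_fin_superset {α : Type*} [Infinite α] (S : Finset α) {r : ℕ}
    (h : S.card ≤ r) : ∃ e : Fin r → α, Function.Injective e ∧ ∀ a ∈ S, ∃ j, e j = a := by
  obtain ⟨E, hSE, hE⟩ := Infinite.exists_superset_card_eq S r h
  let eqv := E.equivFinOfCardEq hE
  exact ⟨fun j => eqv.symm j, Subtype.val_injective.comp eqv.symm.injective,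
    fun a ha => ⟨eqv ⟨a, hSE ha⟩, by simp⟩⟩

theorem exists_eq_mul_and_eq_mul_of_mul_eq_mul {K : Type*} [Field K] {A B c c' : K}
    (hAB : A ≠ 0 ∨ B ≠ 0) (h : A * c' = B * c) : ∃ t, c = t * A ∧ c' = t * B := by
  rcases hAB with hA | hB
  · exact ⟨c / A, by field_simp, by field_simp; linear_combination h⟩
  · exact ⟨c' / B, by field_simp; linear_combination -h, by field_simp⟩

section Apolarity

variable {K : Type} [Field K]

def apolarDeriv (A B : K) : Derivation K (MvPolynomial (Fin 2) K) (MvPolynomial (Fin 2) K) :=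
  A • pderiv 1 - B • pderiv 0

theorem apolarDeriv_apply (A B : K) (g : MvPolynomial (Fin 2) K) :
    apolarDeriv A B g = A • pderiv 1 g - B • pderiv 0 g :=
  rfl

theorem apolarDeriv_pderiv_comm (A B : K) (i : Fin 2) (g : MvPolynomial (Fin 2) K) :
    apolarDeriv A B (pderiv i g) = pderiv i (apolarDeriv A B g) := by
  rw [apolarDeriv_apply, apolarDeriv_apply, map_sub, Derivation.map_smul, Derivation.map_smul,
    pderiv_pderiv_comm i 1, pderiv_pderiv_comm i 0]

theorem apolarDeriv_linForm_pow (A B u v : K) (n : ℕ) :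
    apolarDeriv A B (linForm u v ^ n) = (n * (A * v - B * u)) • linForm u v ^ (n - 1) := by
  rw [Derivation.leibniz_pow, apolarDeriv_apply]
  simp only [linForm, map_add, Derivation.leibniz, pderiv_X_self, pderiv_C,
    pderiv_X_of_ne (by decide : (1 : Fin 2) ≠ 0), pderiv_X_of_ne (by decide : (0 : Fin 2) ≠ 1)]
  simp only [smul_eq_C_mul, nsmul_eq_mul, map_mul, map_sub, map_natCast]
  ring

theorem isHomogeneous_apolarDeriv (A B : K) {n : ℕ} {f : MvPolynomial (Fin 2) K}
    (hf : f.IsHomogeneous n) : (apolarDeriv A B f).IsHomogeneous (n - 1) := by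
  rw [apolarDeriv_apply, smul_eq_C_mul, smul_eq_C_mul]
  exact (hf.pderiv.C_mul A).sub (hf.pderiv.C_mul B)

theorem isHomogeneous_linForm (u v : K) : (linForm u v).IsHomogeneous 1 :=
  ((isHomogeneous_C_mul_X u 0).add (isHomogeneous_C_mul_X v 1))

theorem linForm_ne_zero {u v : K} (h : u ≠ 0 ∨ v ≠ 0) : linForm u v ≠ 0 := by
  intro h0
  have hu := congr(coeff (Finsupp.single 0 1) $h0)
  have hv := congr(coeff (Finsupp.single 1 1) $h0)
  simp [linForm, coeff_X, Finsupp.single_eq_single_iff] at hu hv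
  tauto

theorem eq_smul_linForm_pow_of_apolarDeriv_eq_zero [CharZero K] {A B : K} (hAB : A ≠ 0 ∨ B ≠ 0)
    {n : ℕ} {f : MvPolynomial (Fin 2) K} (hf : f.IsHomogeneous n) (hD : apolarDeriv A B f = 0) :
    ∃ c : K, f = c • linForm A B ^ n := by
  induction n generalizing f with
  | zero =>
    refine ⟨coeff 0 f, ?_⟩
    rw [pow_zero, smul_eq_C_mul, mul_one]
    exact hf.eq_C_coeff_zero
  | succ m ih =>
    have hpderiv (i : Fin 2) : ∃ c : K, pderiv i f = c • linForm A B ^ m :=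
      ih (by simpa using hf.pderiv (i := i)) (by rw [apolarDeriv_pderiv_comm, hD, map_zero])
    obtain ⟨c, hc⟩ := hpderiv 0
    obtain ⟨c', hc'⟩ := hpderiv 1
    obtain ⟨t, rfl, rfl⟩ : ∃ t, c = t * A ∧ c' = t * B := by
      refine exists_eq_mul_and_eq_mul_of_mul_eq_mul hAB (sub_eq_zero.mp ?_)
      have h : (A * c' - B * c) • linForm A B ^ m = 0 := by
        rw [← hD, apolarDeriv_apply, hc, hc', sub_smul, smul_smul, smul_smul]
      exact (smul_eq_zero.mp h).resolve_right (pow_ne_zero _ (linForm_ne_zero hAB))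
    -- Euler's identity: `(m + 1) f = x ∂_x f + y ∂_y f = t (A x + B y) ℓ ^ m`.
    have euler := hf.sum_X_mul_pderiv
    rw [Fin.sum_univ_two, hc, hc'] at euler
    have hm : ((m : K) + 1) ≠ 0 := Nat.cast_add_one_ne_zero m
    refine ⟨t / (m + 1), smul_right_injective _ hm ?_⟩
    dsimp only
    rw [smul_smul, mul_div_cancel₀ t hm, ← Nat.cast_add_one, Nat.cast_smul_eq_nsmul, ← euler]
    simp only [smul_eq_C_mul, linForm, map_mul]
    ring

theorem foldl_apolarDeriv_smul_linForm_pow_eq_zero {ι : Type*} (A B : ι → K) {u v : K} {l : List ι}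
    (hl : ∃ j ∈ l, A j * v = B j * u) (c : K) (n : ℕ) :
    l.foldl (fun g i => apolarDeriv (A i) (B i) g) (c • linForm u v ^ n) = 0 := by
  induction l generalizing c n with
  | nil => simp at hl
  | cons j l ih =>
    rw [List.foldl_cons, Derivation.map_smul, apolarDeriv_linForm_pow, smul_smul]
    obtain ⟨k, hk, hkill⟩ := hl
    rcases List.mem_cons.mp hk with rfl | hk
    · rw [hkill, sub_self, mul_zero, mul_zero, zero_smul]
      exact List.foldl_apply_zero _ l
    · exact ih ⟨k, hk, hkill⟩ _ _

theorem apolarDeriv_smul_linForm_pow_succ [CharZero K] {A B u v : K} (h : A * v ≠ B * u)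
    (m : ℕ) :
    apolarDeriv A B ((((m : K) + 1) * (A * v - B * u))⁻¹ • linForm u v ^ (m + 1)) =
      linForm u v ^ m := by
  have hne : ((m : K) + 1) * (A * v - B * u) ≠ 0 :=
    mul_ne_zero (Nat.cast_add_one_ne_zero m) (sub_ne_zero.mpr h)
  rw [Derivation.map_smul, apolarDeriv_linForm_pow, Nat.add_sub_cancel, smul_smul, Nat.cast_succ,
    inv_mul_cancel₀ hne, one_smul]

theorem span_linForm_pow_le_homogeneousSubmodule {ι : Type*} (A B : ι → K) (s : Set ι) (n : ℕ) :
    Submodule.span K ((fun k => linForm (A k) (B k) ^ n) '' s) ≤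
      homogeneousSubmodule (Fin 2) K n := by
  rw [Submodule.span_le]
  rintro _ ⟨k, -, rfl⟩
  exact (mem_homogeneousSubmodule _ _).mpr (by simpa using (isHomogeneous_linForm _ _).pow n)

theorem span_linForm_pow_le_map_apolarDeriv [CharZero K] {ι : Type*} (A B : ι → K) {j : ι}
    {s : Set ι} (hj : ∀ k ∈ s, A j * B k ≠ A k * B j) (m : ℕ) :
    Submodule.span K ((fun k => linForm (A k) (B k) ^ m) '' s) ≤
      (Submodule.span K ((fun k => linForm (A k) (B k) ^ (m + 1)) '' s)).map
        (apolarDeriv (A j) (B j)).toLinearMap := by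
  rw [Submodule.span_le]
  rintro _ ⟨k, hk, rfl⟩
  have hjk : A j * B k ≠ B j * A k := mul_comm (A k) (B j) ▸ hj k hk
  exact ⟨_, Submodule.smul_mem _ _ (Submodule.subset_span ⟨k, hk, rfl⟩),
    apolarDeriv_smul_linForm_pow_succ hjk m⟩

theorem mem_span_linForm_pow_of_foldl_apolarDeriv_eq_zero [CharZero K] {ι : Type*} {A B : ι → K}
    (hAB : ∀ i, A i ≠ 0 ∨ B i ≠ 0) {l : List ι} (hl : l.Pairwise fun i k => A i * B k ≠ A k * B i)
    {n : ℕ} {f : MvPolynomial (Fin 2) K} (hf : f.IsHomogeneous n)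
    (h : l.foldl (fun g i => apolarDeriv (A i) (B i) g) f = 0) :
    f ∈ Submodule.span K ((fun j => linForm (A j) (B j) ^ n) '' {j | j ∈ l}) := by
  induction l generalizing n f with
  | nil =>
    rw [List.foldl_nil] at h
    simp [h]
  | cons j l ih =>
    obtain ⟨hj, hl⟩ := List.pairwise_cons.mp hl
    have hset : {k | k ∈ j :: l} = insert j {k | k ∈ l} := by ext; simp
    rw [hset, Set.image_insert_eq]
    set S := Submodule.span K ((fun j => linForm (A j) (B j) ^ n) '' {j | j ∈ l})
    -- With `D_j f₀ = D_j f`, the form `f - f₀` lies in the kernel of `D_j`, spanned by `ℓ_j ^ n`.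
    obtain ⟨f₀, hf₀, hDf₀⟩ : ∃ f₀ ∈ S, apolarDeriv (A j) (B j) f₀ = apolarDeriv (A j) (B j) f := by
      cases n with
      | zero =>
        refine ⟨0, S.zero_mem, ?_⟩
        rw [map_zero, hf.eq_C_coeff_zero, apolarDeriv_apply, pderiv_C, pderiv_C, smul_zero,
          smul_zero, sub_zero]
      | succ m =>
        exact span_linForm_pow_le_map_apolarDeriv A B hj m
          (ih hl (isHomogeneous_apolarDeriv (A j) (B j) hf) h)
    have hf₀_hom := span_linForm_pow_le_homogeneousSubmodule A B {k | k ∈ l} n hf₀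
    obtain ⟨c, hc⟩ := eq_smul_linForm_pow_of_apolarDeriv_eq_zero (hAB j)
      (hf.sub ((mem_homogeneousSubmodule _ _).mp hf₀_hom)) (by rw [map_sub, hDf₀, sub_self])
    exact Submodule.mem_span_insert.mpr ⟨c, f₀, hf₀, by rw [← hc, sub_add_cancel]⟩

end Apolarity

section ProjectiveLine

variable {K : Type} [Field K]

/-- Homogeneous coordinates on `ℙ¹(K) = K ∪ {∞}`: `t ↦ (1 : t)` and `∞ ↦ (0 : 1)`. -/
def homCoords (p : OnePoint K) : K × K :=
  p.elim (0, 1) fun t => (1, t)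

open Classical OnePoint in
/-- The point `(u : v)` of `ℙ¹(K)`; the meaningless `(0 : 0)` is sent to `∞`. -/
def OnePoint.ofCoords (u v : K) : OnePoint K :=
  if u = 0 then ∞ else ↑(v / u)

theorem homCoords_ne_zero (p : OnePoint K) : (homCoords p).1 ≠ 0 ∨ (homCoords p).2 ≠ 0 := by
  induction p using OnePoint.rec <;> simp [homCoords]

theorem homCoords_mul_ne {p q : OnePoint K} (h : p ≠ q) :
    (homCoords p).1 * (homCoords q).2 ≠ (homCoords q).1 * (homCoords p).2 := by
  induction p using OnePoint.rec <;> induction q using OnePoint.rec <;>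
    simp_all [homCoords, eq_comm]

theorem homCoords_ofCoords (u v : K) :
    (homCoords (OnePoint.ofCoords u v)).1 * v = (homCoords (OnePoint.ofCoords u v)).2 * u := by
  by_cases hu : u = 0 <;> simp [OnePoint.ofCoords, homCoords, hu]

theorem exists_distinct_points_covering [Infinite K] {s r : ℕ} (hsr : s ≤ r) (u v : Fin s → K) :
    ∃ A B : Fin r → K, (∀ j, A j ≠ 0 ∨ B j ≠ 0) ∧ (∀ i j, i ≠ j → A i * B j ≠ A j * B i) ∧
      ∀ i, ∃ j, A j * v i = B j * u i := by
  classical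
  obtain ⟨e, he, hcover⟩ :=
    (Finset.univ.image fun i => OnePoint.ofCoords (u i) (v i)).exists_injective_fin_superset
      (Finset.card_image_le.trans (by simpa using hsr))
  refine ⟨fun j => (homCoords (e j)).1, fun j => (homCoords (e j)).2, fun j => homCoords_ne_zero _,
    fun i j hij => homCoords_mul_ne (he.ne hij), fun i => ?_⟩
  obtain ⟨j, hj⟩ := hcover _ (Finset.mem_image_of_mem _ (Finset.mem_univ i))
  exact ⟨j, by simpa only [hj] using homCoords_ofCoords (u i) (v i)⟩

end ProjectiveLine

/-- a binary form `f` of degree `d` over a field `K ⊆ ℂ` (char. zero) has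
`K`-rank at most `r` iff the degree-`r` part of its apolar ideal contains an operator that
splits into `r` pairwise distinct linear factors over `K` (i.e. a form with `r` distinct
roots in `ℙ^1(K)`). -/
theorem rank_le_iff_apolar_distinct_roots (K : Type) [Field K] [CharZero K] (d r : ℕ)
    (f : MvPolynomial (Fin 2) K) (hf : f.IsHomogeneous d) :
    (∃ s ≤ r, ∃ (α u v : Fin s → K), f = ∑ i, α i • (linForm (u i) (v i)) ^ d) ↔
      ∃ A B : Fin r → K, (∀ i, A i ≠ 0 ∨ B i ≠ 0) ∧
        (∀ i j, i ≠ j → A i * B j ≠ A j * B i) ∧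
        (List.finRange r).foldl
          (fun g i => A i • pderiv (1 : Fin 2) g - B i • pderiv (0 : Fin 2) g) f = 0 := by
  simp only [← apolarDeriv_apply]
  constructor
  · rintro ⟨s, hs, α, u, v, rfl⟩
    obtain ⟨A, B, hAB, hAB_distinct, hcover⟩ := exists_distinct_points_covering hs u v
    refine ⟨A, B, hAB, hAB_distinct, ?_⟩
    rw [List.foldl_apply_sum]
    refine Finset.sum_eq_zero fun i _ => ?_
    obtain ⟨j, hj⟩ := hcover i
    exact foldl_apolarDeriv_smul_linForm_pow_eq_zero A B ⟨j, List.mem_finRange j, hj⟩ _ _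
  · rintro ⟨A, B, hAB, hAB_distinct, hfold⟩
    have hl : (List.finRange r).Pairwise fun i k => A i * B k ≠ A k * B i :=
      (List.nodup_finRange r).imp (hAB_distinct _ _)
    have hspan := mem_span_linForm_pow_of_foldl_apolarDeriv_eq_zero hAB hl hf hfold
    simp only [List.mem_finRange, Set.ofPred_true, Set.image_univ] at hspan
    obtain ⟨α, hα⟩ := (Submodule.mem_span_range_iff_exists_fun K).mp hspan
    exact ⟨r, le_rfl, α, A, B, hα.symm⟩
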